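/- Let k ≥ 3 be an odd integer and let g be an element of the normalizer of A_k in SL₂(ℂ). Then σ_c(g)·g ∈ A_k if and only if there exist a nonzero x ∈ ℝ and h ∈ A_k such that g = diag(x, x⁻¹)·h. In particular no antidiagonal element g of the normalizer satisfies σ_c(g)·g ∈ A_k. (This computes, for k odd, the 1-cocycles Z¹(Gal(ℂ/ℝ), N/A_k) for the Galois action on N/A_k induced by σ_c, where N is the normalizer of A_k.) -/

import Mathlib

open Matrix Complex ComplexConjugate

/-!
Conjugation by `g` preserves `A_k`, so `g ω g⁻¹ = ωᶜ`; comparing entries, and using `ζ ≠ ζ⁻¹`,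
`g` is either `diag(a, a⁻¹)` or antidiagonal `[[0, b], [-b⁻¹, 0]]`. In the antidiagonal case
`σ_c(g) g = diag(-|b|⁻², -|b|²)`, and a negative real number is not a root of unity of odd order.
In the diagonal case `σ_c(g) g = diag(a / ā, ā / a)`. If `a / ā = ζⁿ`, then since `k` is odd,
`ζⁿ = (ζᵐ)²` with `m = n (k + 1) / 2`, so `a ζ⁻ᵐ` is fixed by conjugation, i.e. real.
-/

namespace Matrix

variable {K : Type*} [Field K]

def diagInv (z : K) : Matrix (Fin 2) (Fin 2) K := !![z, 0; 0, z⁻¹]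

def antidiagInv (b : K) : Matrix (Fin 2) (Fin 2) K := !![0, b; -b⁻¹, 0]

theorem diagInv_injective : Function.Injective (diagInv : K → Matrix (Fin 2) (Fin 2) K) :=
  fun a b h => by simpa [diagInv] using congrFun (congrFun h 0) 0

theorem diagInv_mul_diagInv (a b : K) : diagInv a * diagInv b = diagInv (a * b) := by
  simp [diagInv, mul_comm]

theorem inv_diagInv (a : K) : (diagInv a)⁻¹ = diagInv a⁻¹ := by
  rcases eq_or_ne a 0 with rfl | ha
  · have h0 : diagInv (0 : K) = 0 := by ext i j; fin_cases i <;> fin_cases j <;> simp [diagInv]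
    simp only [_root_.inv_zero, Matrix.inv_zero, h0]
  · refine inv_eq_left_inv ?_
    simp [diagInv, one_fin_two, ha]

theorem antidiagInv_mul_antidiagInv (a b : K) :
    antidiagInv a * antidiagInv b = diagInv (-(a / b)) := by
  simp [antidiagInv, diagInv, div_eq_mul_inv, mul_comm]

theorem inv_antidiagInv (b : K) : (antidiagInv b)⁻¹ = antidiagInv (-b) := by
  rcases eq_or_ne b 0 with rfl | hb
  · have h0 : antidiagInv (0 : K) = 0 := by
      ext i j; fin_cases i <;> fin_cases j <;> simp [antidiagInv]
    simp only [neg_zero, Matrix.inv_zero, h0]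
  · refine inv_eq_left_inv ?_
    rw [antidiagInv_mul_antidiagInv, neg_div_self hb, neg_neg]
    simp [diagInv, one_fin_two]

section Star

variable [StarRing K]

theorem conjTranspose_diagInv (a : K) : (diagInv a)ᴴ = diagInv (star a) := by
  ext i j; fin_cases i <;> fin_cases j <;> simp [diagInv, star_inv₀]

theorem conjTranspose_antidiagInv (b : K) : (antidiagInv b)ᴴ = antidiagInv (-(star b)⁻¹) := by
  ext i j; fin_cases i <;> fin_cases j <;> simp [antidiagInv, star_inv₀]

theorem conjTranspose_inv_mul_diagInv (a : K) :
    ((diagInv a)ᴴ)⁻¹ * diagInv a = diagInv ((star a)⁻¹ * a) := by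
  rw [conjTranspose_diagInv, inv_diagInv, diagInv_mul_diagInv]

theorem conjTranspose_inv_mul_antidiagInv (b : K) :
    ((antidiagInv b)ᴴ)⁻¹ * antidiagInv b = diagInv (-(star b * b)⁻¹) := by
  rw [conjTranspose_antidiagInv, inv_antidiagInv, neg_neg, antidiagInv_mul_antidiagInv,
    div_eq_mul_inv, mul_inv]

end Star

theorem eq_diagInv_or_eq_antidiagInv_of_mul_diagInv_eq {G : Matrix (Fin 2) (Fin 2) K} {ζ μ : K}
    (hdet : G.det = 1) (hζ : ζ ≠ ζ⁻¹) (h : G * diagInv ζ = diagInv μ * G) :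
    (∃ a, G = diagInv a) ∨ ∃ b, G = antidiagInv b := by
  rw [eta_fin_two G, det_fin_two_of] at *
  set a := G 0 0; set b := G 0 1; set c := G 1 0; set d := G 1 1
  simp only [diagInv, mul_fin_two, mul_zero, add_zero, zero_mul, zero_add] at h
  have e00 : a * ζ = μ * a := congrFun (congrFun h 0) 0
  have e01 : b * ζ⁻¹ = μ * b := congrFun (congrFun h 0) 1
  have e10 : c * ζ = μ⁻¹ * c := congrFun (congrFun h 1) 0
  have e11 : d * ζ⁻¹ = μ⁻¹ * d := congrFun (congrFun h 1) 1
  have hζ' : ζ⁻¹ - ζ ≠ 0 := sub_ne_zero.mpr hζ.symm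
  by_cases ha : a = 0
  · have hb : b ≠ 0 := by rintro hb; simp [ha, hb] at hdet
    have hμ : μ = ζ⁻¹ := mul_right_cancel₀ hb (by linear_combination -e01)
    have hd : d = 0 := by
      rw [hμ, inv_inv] at e11
      exact (mul_eq_zero.mp (by linear_combination e11 : (ζ⁻¹ - ζ) * d = 0)).resolve_left hζ'
    have hc : c = -b⁻¹ := by
      rw [ha, hd] at hdet
      field_simp
      linear_combination -hdet
    exact Or.inr ⟨b, by rw [ha, hc, hd]; rfl⟩
  · have hμ : μ = ζ := mul_right_cancel₀ ha (by linear_combination -e00)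
    rw [hμ] at e01 e10
    have hb : b = 0 :=
      (mul_eq_zero.mp (by linear_combination e01 : (ζ⁻¹ - ζ) * b = 0)).resolve_left hζ'
    have hc : c = 0 :=
      (mul_eq_zero.mp (by linear_combination -e10 : (ζ⁻¹ - ζ) * c = 0)).resolve_left hζ'
    have hd : d = a⁻¹ := by
      rw [hb, hc] at hdet
      field_simp
      linear_combination hdet
    exact Or.inl ⟨a, by rw [hb, hc, hd]; rfl⟩

namespace SpecialLinearGroup

def diagUnitsHom : Kˣ →* SpecialLinearGroup (Fin 2) K where
  toFun u := ⟨diagInv (u : K), by simp [diagInv, det_fin_two_of]⟩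
  map_one' := by ext i j; fin_cases i <;> fin_cases j <;> simp [diagInv]
  map_mul' u v := Subtype.ext (diagInv_mul_diagInv (u : K) (v : K)).symm

theorem coe_diagUnitsHom (u : Kˣ) :
    (diagUnitsHom u : Matrix (Fin 2) (Fin 2) K) = diagInv (u : K) :=
  rfl

theorem coe_zpow_of_coe_eq_diagInv {ω : SpecialLinearGroup (Fin 2) K} {ζ : K}
    (hω : (ω : Matrix (Fin 2) (Fin 2) K) = diagInv ζ) (hζ : ζ ≠ 0) (n : ℤ) :
    ((ω ^ n : SpecialLinearGroup (Fin 2) K) : Matrix (Fin 2) (Fin 2) K) = diagInv (ζ ^ n) := by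
  have : ω = diagUnitsHom (Units.mk0 ζ hζ) := Subtype.ext hω
  rw [this, ← map_zpow, coe_diagUnitsHom, Units.val_zpow_eq_zpow_val, Units.val_mk0]

end SpecialLinearGroup

end Matrix

theorem IsPrimitiveRoot.ne_inv {K : Type*} [Field K] {ζ : K} {k : ℕ} (hζ : IsPrimitiveRoot ζ k)
    (hk : 3 ≤ k) : ζ ≠ ζ⁻¹ := by
  intro h
  have hsq : ζ ^ 2 = 1 := by
    rwa [sq, mul_eq_one_iff_eq_inv₀ (hζ.ne_zero (by omega))]
  have := Nat.le_of_dvd two_pos (hζ.dvd_of_pow_eq_one 2 hsq)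
  omega

theorem exists_conj_inv_mul_eq_zpow_iff {k : ℕ} (hk : Odd k) {ζ : ℂ} (hζk : ζ ^ k = 1) (a : ℂ) :
    (∃ n : ℤ, (conj a)⁻¹ * a = ζ ^ n) ↔ ∃ m : ℤ, ∃ x : ℝ, x ≠ 0 ∧ a = x * ζ ^ m := by
  have hζ : conj ζ = ζ⁻¹ := (inv_eq_conj (norm_eq_one_of_pow_eq_one hζk hk.pos.ne')).symm
  have hζ0 : ζ ≠ 0 := by rintro rfl; simp [hk.pos.ne'] at hζk
  have conj_zpow (m : ℤ) : conj (ζ ^ m) = (ζ ^ m)⁻¹ := by rw [map_zpow₀, hζ, _root_.inv_zpow]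
  constructor
  · rintro ⟨n, hn⟩
    have ha : conj a ≠ 0 := by
      rintro h
      rw [h, _root_.inv_zero, zero_mul] at hn
      exact zpow_ne_zero n hζ0 hn.symm
    obtain ⟨t, rfl⟩ := hk
    set m : ℤ := n * (t + 1)
    have hsq : ζ ^ m * ζ ^ m = ζ ^ n := by
      rw [← zpow_add₀ hζ0, show m + m = (2 * t + 1 : ℕ) * n + n by push_cast; ring,
        zpow_add₀ hζ0, _root_.zpow_mul, zpow_natCast, hζk, _root_.one_zpow, one_mul]
    have hreal : conj (a * (ζ ^ m)⁻¹) = a * (ζ ^ m)⁻¹ := by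
      rw [map_mul, map_inv₀, conj_zpow, inv_inv]
      have hac : a = conj a * (ζ ^ m * ζ ^ m) := by
        rw [hsq, ← hn, ← mul_assoc, mul_inv_cancel₀ ha, one_mul]
      rw [eq_mul_inv_iff_mul_eq₀ (zpow_ne_zero m hζ0), mul_assoc]
      exact hac.symm
    refine ⟨m, (a * (ζ ^ m)⁻¹).re, ?_, ?_⟩
    · rw [Ne, ← ofReal_eq_zero, conj_eq_iff_re.mp hreal]
      exact mul_ne_zero ((map_ne_zero _).mp ha) (inv_ne_zero (zpow_ne_zero m hζ0))
    · rw [conj_eq_iff_re.mp hreal, inv_mul_cancel_right₀ (zpow_ne_zero m hζ0)]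
  · rintro ⟨m, x, hx, rfl⟩
    refine ⟨m * 2, ?_⟩
    have hx' : (x : ℂ) ≠ 0 := ofReal_ne_zero.mpr hx
    rw [map_mul, conj_ofReal, conj_zpow, _root_.zpow_mul]
    field_simp

theorem neg_inv_conj_mul_self_ne_zpow {k : ℕ} (hk : Odd k) {ζ : ℂ} (hζk : ζ ^ k = 1) (b : ℂ)
    (n : ℤ) : -(conj b * b)⁻¹ ≠ ζ ^ n := by
  intro h
  have hpow : ((-(normSq b)⁻¹ : ℝ) : ℂ) ^ k = 1 := by
    rw [← zpow_natCast, ofReal_neg, ofReal_inv, normSq_eq_conj_mul_self, h, ← _root_.zpow_mul,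
      mul_comm, _root_.zpow_mul, zpow_natCast, hζk, _root_.one_zpow]
  have hnonpos : (-(normSq b)⁻¹) ^ k ≤ 0 := hk.pow_nonpos (by simp [normSq_nonneg])
  have hone : (-(normSq b)⁻¹) ^ k = 1 := by exact_mod_cast hpow
  linarith

/-- Let `k ≥ 3` be odd, `ζ` a primitive `k`-th root of unity,
`A_k = ⟨ω⟩` with `ω = diag(ζ, ζ⁻¹)`, and let `g` lie in the normalizer of `A_k` in `SL₂(ℂ)`.
Then `σ_c(g)·g ∈ A_k` iff `g = diag(x, x⁻¹)·h` for some nonzero real `x` and some `h ∈ A_k`.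
In particular, no antidiagonal element `g` of the normalizer satisfies `σ_c(g)·g ∈ A_k`. -/
theorem statement7 (k : ℕ) (hk : 3 ≤ k) (hodd : Odd k)
    (ζ : ℂ) (hζ : IsPrimitiveRoot ζ k)
    (ω : Matrix.SpecialLinearGroup (Fin 2) ℂ)
    (hω : (↑ω : Matrix (Fin 2) (Fin 2) ℂ) = !![ζ, 0; 0, ζ⁻¹])
    (g : Matrix.SpecialLinearGroup (Fin 2) ℂ)
    (hg : g ∈ Subgroup.normalizer (Subgroup.zpowers ω : Set (Matrix.SpecialLinearGroup (Fin 2) ℂ))) :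
    ((∃ h ∈ Subgroup.zpowers ω,
        ((↑g : Matrix (Fin 2) (Fin 2) ℂ)ᴴ)⁻¹ * (↑g : Matrix (Fin 2) (Fin 2) ℂ)
          = (↑h : Matrix (Fin 2) (Fin 2) ℂ)) ↔
      ∃ h ∈ Subgroup.zpowers ω, ∃ x : ℝ, x ≠ 0 ∧
        (↑g : Matrix (Fin 2) (Fin 2) ℂ)
          = !![(x : ℂ), 0; 0, (x : ℂ)⁻¹] * (↑h : Matrix (Fin 2) (Fin 2) ℂ)) ∧
    (∀ b : ℂ, (↑g : Matrix (Fin 2) (Fin 2) ℂ) = !![0, b; -b⁻¹, 0] →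
      ¬ ∃ h ∈ Subgroup.zpowers ω,
          ((↑g : Matrix (Fin 2) (Fin 2) ℂ)ᴴ)⁻¹ * (↑g : Matrix (Fin 2) (Fin 2) ℂ)
            = (↑h : Matrix (Fin 2) (Fin 2) ℂ)) := by
  have hζk : ζ ^ k = 1 := hζ.pow_eq_one
  have hω' : (ω : Matrix (Fin 2) (Fin 2) ℂ) = diagInv ζ := hω
  have coe_zpow := SpecialLinearGroup.coe_zpow_of_coe_eq_diagInv hω' (hζ.ne_zero (by omega))
  have not_antidiag (b : ℂ) (n : ℤ) :
      ((antidiagInv b)ᴴ)⁻¹ * antidiagInv b ≠ diagInv (ζ ^ n) := by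
    rw [conjTranspose_inv_mul_antidiagInv, diagInv_injective.ne_iff]
    exact neg_inv_conj_mul_self_ne_zpow hodd hζk b n
  simp only [Subgroup.exists_mem_zpowers, coe_zpow]
  refine ⟨⟨fun ⟨n, hn⟩ => ?_, fun ⟨m, x, hx, hgx⟩ => ?_⟩,
    fun b hb ⟨n, hn⟩ => not_antidiag b n (by rwa [hb] at hn)⟩
  · obtain ⟨c, hc⟩ := Subgroup.mem_zpowers_iff.mp
      ((Subgroup.mem_normalizer_iff.mp hg ω).mp (Subgroup.mem_zpowers ω))
    have hcomm : (g : Matrix (Fin 2) (Fin 2) ℂ) * diagInv ζ = diagInv (ζ ^ c) * g := by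
      have h : g * ω = ω ^ c * g := by rw [hc]; group
      rw [← hω', ← coe_zpow]
      exact congrArg (fun h : SpecialLinearGroup (Fin 2) ℂ => (h : Matrix (Fin 2) (Fin 2) ℂ)) h
    rcases eq_diagInv_or_eq_antidiagInv_of_mul_diagInv_eq g.prop (hζ.ne_inv hk) hcomm
      with ⟨a, ha⟩ | ⟨b, hb⟩
    · rw [ha, conjTranspose_inv_mul_diagInv, diagInv_injective.eq_iff] at hn
      obtain ⟨m, x, hx, rfl⟩ := (exists_conj_inv_mul_eq_zpow_iff hodd hζk a).mp ⟨n, hn⟩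
      exact ⟨m, x, hx, ha.trans (diagInv_mul_diagInv _ _).symm⟩
    · exact absurd (hb ▸ hn) (not_antidiag b n)
  · obtain ⟨n, hn⟩ := (exists_conj_inv_mul_eq_zpow_iff hodd hζk (x * ζ ^ m)).mpr ⟨m, x, hx, rfl⟩
    refine ⟨n, ?_⟩
    rw [show (g : Matrix (Fin 2) (Fin 2) ℂ) = diagInv (x * ζ ^ m) from hgx.trans
      (diagInv_mul_diagInv _ _), conjTranspose_inv_mul_diagInv]
    exact congrArg diagInv hn
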